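/- arXiv:1010.1902 — 2 statements merged into one kernel-verified Lean document; each statement's English description precedes it below -/
import Mathlib

section
/- Let f:(0,∞)→(0,∞) be measurable, bounded on compact subsets of (0,∞), and regularly varying at +∞ with index β>−1. Then Σ_{k=1}^n f(k) ∼ n f(n)/(1+β) as n→∞, i.e. lim_{n→∞} (Σ_{k=1}^n f(k))/(n f(n)) = 1/(1+β). -/
open Filter Real

/-- A function `f` is regularly varying at `+∞` with index `β` if for every `λ > 0`,
`f(λx)/f(x) → λ^β` as `x → +∞`. -/
def RegularlyVarying (f : ℝ → ℝ) (β : ℝ) : Prop :=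
  ∀ l : ℝ, 0 < l → Filter.Tendsto (fun x => f (l * x) / f x) Filter.atTop (nhds (l ^ β))

/-!
Since `(∑_{k ≤ n} f k) / (n f n) = (1/n) ∑_{k ≤ n} f k / f n`, replacing `f k / f n` by `(k/n)^β`
turns the left side into a Riemann sum for `∫₀¹ t^β dt = 1/(1+β)`. The uniform convergence
theorem (a Steinhaus-type measure argument applied to `log ∘ f ∘ exp`) makes this replacement
cost `o(1)` uniformly over `δn ≤ k ≤ n`. For `k < δn`, Potter's bound `f k / f n ≤ C (k/n)^γ`
with `-1 < γ ≤ 0`, `γ < β`, bounds both sums by a multiple of `∫₀^δ t^γ dt`, which is small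
with `δ`.
-/

open Finset Topology MeasureTheory

namespace Real

theorem rpow_le_rpow_add_mul_sub {p a c : ℝ} (hp0 : 0 ≤ p) (hp1 : p ≤ 1) (ha : 0 < a)
    (hc : 0 ≤ c) : c ^ p ≤ a ^ p + p * a ^ (p - 1) * (c - a) := by
  have h := rpow_one_add_le_one_add_mul_self (s := c / a - 1) (by linarith [div_nonneg hc ha.le])
    hp0 hp1
  rw [add_sub_cancel, div_rpow hc ha.le, div_le_iff₀ (rpow_pos_of_pos ha p)] at h
  calc c ^ p ≤ (1 + p * (c / a - 1)) * a ^ p := h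
    _ = a ^ p + p * (a ^ p / a) * (c - a) := by field_simp
    _ = a ^ p + p * a ^ (p - 1) * (c - a) := by rw [rpow_sub_one ha.ne']

theorem rpow_add_mul_sub_le_rpow {p a c : ℝ} (hp : 1 ≤ p) (ha : 0 < a) (hc : 0 ≤ c) :
    a ^ p + p * a ^ (p - 1) * (c - a) ≤ c ^ p := by
  have h := one_add_mul_self_le_rpow_one_add (s := c / a - 1) (by linarith [div_nonneg hc ha.le]) hp
  rw [add_sub_cancel, div_rpow hc ha.le, le_div_iff₀ (rpow_pos_of_pos ha p)] at h
  calc a ^ p + p * a ^ (p - 1) * (c - a) = a ^ p + p * (a ^ p / a) * (c - a) := by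
        rw [rpow_sub_one ha.ne']
    _ = (1 + p * (c / a - 1)) * a ^ p := by field_simp
    _ ≤ c ^ p := h

end Real

theorem sum_Icc_rpow_bounds_of_nonpos {β : ℝ} (hβ : -1 < β) (hβ0 : β ≤ 0) (n : ℕ) :
    ((n : ℝ) + 1) ^ (1 + β) - 1 ≤ (1 + β) * ∑ k ∈ Icc 1 n, (k : ℝ) ^ β ∧
      (1 + β) * ∑ k ∈ Icc 1 n, (k : ℝ) ^ β ≤ (n : ℝ) ^ (1 + β) := by
  induction n with
  | zero => simp [zero_rpow (by linarith : 1 + β ≠ 0)]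
  | succ n ih =>
    have ha : (0 : ℝ) < n + 1 := by positivity
    -- tangent lines of the concave `t ↦ t ^ (1 + β)` at `n + 1`, evaluated at `n + 2` and `n`
    have hup := rpow_le_rpow_add_mul_sub (p := 1 + β) (c := n + 1 + 1) (by linarith)
      (by linarith) ha (by positivity)
    have hlo := rpow_le_rpow_add_mul_sub (p := 1 + β) (c := n) (by linarith) (by linarith) ha
      (by positivity)
    rw [add_sub_cancel_left, add_sub_cancel_left, mul_one] at hup
    rw [add_sub_cancel_left, sub_add_cancel_left, mul_neg_one] at hlo
    rw [sum_Icc_succ_top (by omega), mul_add]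
    push_cast
    constructor <;> linarith [ih.1, ih.2]

theorem sum_Icc_rpow_bounds_of_nonneg {β : ℝ} (hβ0 : 0 ≤ β) (n : ℕ) :
    (n : ℝ) ^ (1 + β) ≤ (1 + β) * ∑ k ∈ Icc 1 n, (k : ℝ) ^ β ∧
      (1 + β) * ∑ k ∈ Icc 1 n, (k : ℝ) ^ β ≤ ((n : ℝ) + 1) ^ (1 + β) - 1 := by
  induction n with
  | zero => simp [zero_rpow (by linarith : 1 + β ≠ 0)]
  | succ n ih =>
    have ha : (0 : ℝ) < n + 1 := by positivity
    have hup := rpow_add_mul_sub_le_rpow (p := 1 + β) (c := n + 1 + 1) (by linarith) ha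
      (by positivity)
    have hlo := rpow_add_mul_sub_le_rpow (p := 1 + β) (c := n) (by linarith) ha (by positivity)
    rw [add_sub_cancel_left, add_sub_cancel_left, mul_one] at hup
    rw [add_sub_cancel_left, sub_add_cancel_left, mul_neg_one] at hlo
    rw [sum_Icc_succ_top (by omega), mul_add]
    push_cast
    constructor <;> linarith [ih.1, ih.2]

theorem mul_sum_Icc_rpow_mem_uIcc {β : ℝ} (hβ : -1 < β) (n : ℕ) :
    (1 + β) * ∑ k ∈ Icc 1 n, (k : ℝ) ^ β ∈
      Set.uIcc ((n : ℝ) ^ (1 + β)) (((n : ℝ) + 1) ^ (1 + β) - 1) := by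
  rcases le_total β 0 with hβ0 | hβ0
  · exact Set.mem_uIcc.2 (Or.inr (sum_Icc_rpow_bounds_of_nonpos hβ hβ0 n))
  · exact Set.mem_uIcc.2 (Or.inl (sum_Icc_rpow_bounds_of_nonneg hβ0 n))

theorem sum_Icc_div_rpow (β : ℝ) (K n : ℕ) :
    ∑ k ∈ Icc 1 K, ((k : ℝ) / n) ^ β = (∑ k ∈ Icc 1 K, (k : ℝ) ^ β) / (n : ℝ) ^ β := by
  simp_rw [div_rpow (Nat.cast_nonneg _) (Nat.cast_nonneg _), sum_div]

theorem tendsto_sum_Icc_div_rpow_div {β : ℝ} (hβ : -1 < β) :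
    Tendsto (fun n : ℕ => (∑ k ∈ Icc 1 n, ((k : ℝ) / n) ^ β) / n) atTop (𝓝 (1 / (1 + β))) := by
  set p := 1 + β
  have hp : 0 < p := by linarith
  have hnp : Tendsto (fun n : ℕ => (n : ℝ) ^ p) atTop atTop :=
    (tendsto_rpow_atTop hp).comp tendsto_natCast_atTop_atTop
  have hupper : Tendsto (fun n : ℕ => (((n : ℝ) + 1) ^ p - 1) / (n : ℝ) ^ p) atTop (𝓝 1) := by
    have hratio : Tendsto (fun n : ℕ => ((n : ℝ) + 1) / n) atTop (𝓝 1) := by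
      simpa using (tendsto_natCast_div_add_atTop (1 : ℝ)).inv₀ one_ne_zero
    have := ((continuousAt_rpow_const 1 p (Or.inl one_ne_zero)).tendsto.comp hratio).sub
      hnp.inv_tendsto_atTop
    rw [one_rpow, sub_zero] at this
    refine this.congr' ?_
    filter_upwards [eventually_gt_atTop 0] with n hn
    have hn' : (0 : ℝ) < n := by exact_mod_cast hn
    simp [div_rpow (by positivity : (0:ℝ) ≤ n + 1) hn'.le, sub_div]
  have hlim : Tendsto (fun n : ℕ => p * (∑ k ∈ Icc 1 n, (k : ℝ) ^ β) / (n : ℝ) ^ p) atTop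
      (𝓝 1) := by
    have hmin := (tendsto_const_nhds (x := (1 : ℝ))).min hupper
    have hmax := (tendsto_const_nhds (x := (1 : ℝ))).max hupper
    rw [min_self] at hmin
    rw [max_self] at hmax
    refine tendsto_of_tendsto_of_tendsto_of_le_of_le' hmin hmax ?_ ?_ <;>
    filter_upwards [hnp.eventually_gt_atTop 0] with n hn
    · calc _ = min ((n : ℝ) ^ p) (((n : ℝ) + 1) ^ p - 1) / (n : ℝ) ^ p := by
            rw [← min_div_div_right hn.le, div_self hn.ne']
        _ ≤ _ := div_le_div_of_nonneg_right (mul_sum_Icc_rpow_mem_uIcc hβ n).1 hn.le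
    · calc _ ≤ max ((n : ℝ) ^ p) (((n : ℝ) + 1) ^ p - 1) / (n : ℝ) ^ p :=
            div_le_div_of_nonneg_right (mul_sum_Icc_rpow_mem_uIcc hβ n).2 hn.le
        _ = _ := by rw [← max_div_div_right hn.le, div_self hn.ne']
  refine (hlim.div_const p).congr' ?_
  filter_upwards [eventually_gt_atTop 0] with n hn
  have hn' : (0 : ℝ) < n := by exact_mod_cast hn
  rw [sum_Icc_div_rpow, rpow_add hn', rpow_one]
  field_simp

theorem sum_Icc_div_rpow_le {γ : ℝ} (hγ : -1 < γ) (hγ0 : γ ≤ 0) (K : ℕ) {n : ℕ} (hn : 0 < n) :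
    ∑ k ∈ Icc 1 K, ((k : ℝ) / n) ^ γ ≤ n * ((K : ℝ) / n) ^ (1 + γ) / (1 + γ) := by
  have hn' : (0 : ℝ) < n := by exact_mod_cast hn
  have hp : 0 < 1 + γ := by linarith
  rw [sum_Icc_div_rpow, div_rpow (Nat.cast_nonneg _) hn'.le, rpow_add hn', rpow_one]
  calc (∑ k ∈ Icc 1 K, (k : ℝ) ^ γ) / (n : ℝ) ^ γ
      = (1 + γ) * (∑ k ∈ Icc 1 K, (k : ℝ) ^ γ) / ((1 + γ) * (n : ℝ) ^ γ) := by field_simp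
    _ ≤ (K : ℝ) ^ (1 + γ) / ((1 + γ) * (n : ℝ) ^ γ) :=
        div_le_div_of_nonneg_right (sum_Icc_rpow_bounds_of_nonpos hγ hγ0 K).2 (by positivity)
    _ = _ := by field_simp

theorem abs_sum_div_sub_sum_div_le {a r : ℕ → ℝ} {n : ℕ} {γ D δ η : ℝ} (hn : 0 < n)
    (hγ : -1 < γ) (hγ0 : γ ≤ 0) (hD : 0 ≤ D) (hδ : 0 ≤ δ) (hη : 0 ≤ η)
    (hfar : ∀ k ∈ Icc 1 n, |a k - r k| ≤ D * ((k : ℝ) / n) ^ γ)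
    (hnear : ∀ k ∈ Icc 1 n, δ * n ≤ k → |a k - r k| ≤ η) :
    |(∑ k ∈ Icc 1 n, a k) / n - (∑ k ∈ Icc 1 n, r k) / n| ≤ D * δ ^ (1 + γ) / (1 + γ) + η := by
  have hn' : (0 : ℝ) < n := by exact_mod_cast hn
  have hp : 0 < 1 + γ := by linarith
  have hsmall : ∑ k ∈ (Icc 1 n).filter (fun k : ℕ => (k : ℝ) < δ * n), |a k - r k| ≤
      n * (D * δ ^ (1 + γ) / (1 + γ)) := by
    calc _ ≤ ∑ k ∈ (Icc 1 n).filter (fun k : ℕ => (k : ℝ) < δ * n), D * ((k : ℝ) / n) ^ γ :=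
          sum_le_sum fun k hk => hfar k (mem_filter.1 hk).1
      _ ≤ ∑ k ∈ Icc 1 ⌊δ * n⌋₊, D * ((k : ℝ) / n) ^ γ := by
          refine sum_le_sum_of_subset_of_nonneg (fun k hk => ?_) fun k _ _ => by positivity
          obtain ⟨hk, hkδ⟩ := mem_filter.1 hk
          exact mem_Icc.2 ⟨(mem_Icc.1 hk).1, Nat.le_floor hkδ.le⟩
      _ ≤ D * (n * ((⌊δ * n⌋₊ : ℝ) / n) ^ (1 + γ) / (1 + γ)) := by
          rw [← mul_sum]
          exact mul_le_mul_of_nonneg_left (sum_Icc_div_rpow_le hγ hγ0 _ hn) hD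
      _ ≤ D * (n * δ ^ (1 + γ) / (1 + γ)) := by
          gcongr
          rw [div_le_iff₀ hn']
          exact Nat.floor_le (by positivity)
      _ = _ := by ring
  have hlarge : ∑ k ∈ (Icc 1 n).filter (fun k : ℕ => ¬(k : ℝ) < δ * n), |a k - r k| ≤ n * η := by
    calc _ ≤ #((Icc 1 n).filter (fun k : ℕ => ¬(k : ℝ) < δ * n)) • η :=
          sum_le_card_nsmul _ _ _ fun k hk =>
            hnear k (mem_filter.1 hk).1 (not_lt.1 (mem_filter.1 hk).2)
      _ ≤ n * η := by
          rw [nsmul_eq_mul]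
          gcongr
          exact (card_filter_le _ _).trans (by simp)
  rw [← sub_div, ← sum_sub_distrib, abs_div, Nat.abs_cast, div_le_iff₀ hn']
  calc |∑ k ∈ Icc 1 n, (a k - r k)| ≤ ∑ k ∈ Icc 1 n, |a k - r k| := abs_sum_le_sum_abs _ _
    _ = _ := (sum_filter_add_sum_filter_not _ _ _).symm
    _ ≤ _ := add_le_add hsmall hlarge
    _ = _ := by ring

theorem tendsto_sum_div_sub_sum_div_of_dominated {a r : ℕ → ℕ → ℝ} {γ D : ℝ} (hγ : -1 < γ)
    (hγ0 : γ ≤ 0) (hD : 0 ≤ D)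
    (hfar : ∀ᶠ n : ℕ in atTop, ∀ k ∈ Icc 1 n, |a n k - r n k| ≤ D * ((k : ℝ) / n) ^ γ)
    (hnear : ∀ δ > (0 : ℝ), ∀ η > (0 : ℝ), ∀ᶠ n : ℕ in atTop, ∀ k ∈ Icc 1 n, δ * n ≤ k →
      |a n k - r n k| ≤ η) :
    Tendsto (fun n : ℕ => (∑ k ∈ Icc 1 n, a n k) / n - (∑ k ∈ Icc 1 n, r n k) / n) atTop (𝓝 0) := by
  have hp : 0 < 1 + γ := by linarith
  refine Metric.tendsto_nhds.2 fun ε hε => ?_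
  set δ := (ε * (1 + γ) / (2 * (D + 1))) ^ (1 + γ)⁻¹
  have hδ : 0 < δ := by positivity
  have hδp : D * δ ^ (1 + γ) / (1 + γ) < ε / 2 := by
    rw [← rpow_mul (by positivity), inv_mul_cancel₀ hp.ne', rpow_one, div_lt_iff₀ hp]
    field_simp
    nlinarith [mul_pos hε hp]
  filter_upwards [hfar, hnear δ hδ (ε / 3) (by positivity), eventually_gt_atTop 0]
    with n hfar hnear hn
  rw [Real.dist_eq, sub_zero]
  calc _ ≤ D * δ ^ (1 + γ) / (1 + γ) + ε / 3 :=
        abs_sum_div_sub_sum_div_le hn hγ hγ0 hD hδ.le (by positivity) hfar hnear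
    _ < ε := by linarith

theorem exists_mem_Icc_notMem_notMem_add {A B : Set ℝ} (hAB : volume A + volume B < 1) (s : ℝ) :
    ∃ t ∈ Set.Icc (0 : ℝ) 1, t ∉ A ∧ t + s ∉ B := by
  by_contra! hcover
  have hsub : Set.Icc (0 : ℝ) 1 ⊆ A ∪ (· + s) ⁻¹' B := fun t ht => by
    by_cases htA : t ∈ A
    · exact Or.inl htA
    · exact Or.inr (hcover t ht htA)
  have := (measure_mono (μ := volume) hsub).trans (measure_union_le _ _)
  rw [measure_preimage_add_right, Real.volume_Icc, sub_zero, ENNReal.ofReal_one] at this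
  exact (this.trans_lt hAB).false

section UniformConvergence

variable {h : ℝ → ℝ} {β : ℝ}

theorem tendsto_volume_setOf_le_abs_sub (hh : Measurable h)
    (hpt : ∀ u, Tendsto (fun y => h (y + u) - h y) atTop (𝓝 (β * u))) {z : ℕ → ℝ}
    (hz : Tendsto z atTop atTop) {δ : ℝ} (hδ : 0 < δ) (a b : ℝ) :
    Tendsto (fun n => volume ({t | δ ≤ |h (z n + t) - h (z n) - β * t|} ∩ Set.Icc a b)) atTop
      (𝓝 0) := by
  have := tendstoInMeasure_iff_dist.1 (tendstoInMeasure_of_tendsto_ae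
    (μ := volume.restrict (Set.Icc a b)) (f := fun n t => h (z n + t) - h (z n))
    (g := fun t => β * t)
    (fun n => ((hh.comp (measurable_const_add _)).sub_const _).aestronglyMeasurable)
    (ae_of_all _ fun t => (hpt t).comp hz)) δ hδ
  simpa only [Measure.restrict_apply' measurableSet_Icc, Real.dist_eq] using this

theorem tendstoUniformlyOn_add_sub_of_tendsto (hh : Measurable h)
    (hpt : ∀ u, Tendsto (fun y => h (y + u) - h y) atTop (𝓝 (β * u))) (c d : ℝ) :
    TendstoUniformlyOn (fun y u => h (y + u) - h y) (fun u => β * u) atTop (Set.Icc c d) := by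
  rw [Metric.tendstoUniformlyOn_iff]
  intro ε hε
  by_contra hbad
  rw [not_eventually, frequently_atTop] at hbad
  choose y hy hyu using fun n : ℕ => hbad n
  push Not at hyu
  choose u hu hεu using hyu
  have hytop : Tendsto y atTop atTop := tendsto_atTop_mono hy tendsto_natCast_atTop_atTop
  have hyutop : Tendsto (fun n => y n + u n) atTop atTop :=
    tendsto_atTop_mono (fun n => add_le_add (hy n) (hu n).1)
      (tendsto_atTop_add_const_right _ c tendsto_natCast_atTop_atTop)
  have hhalf : (0 : ENNReal) < 1 / 2 := by simp
  obtain ⟨n, hA, hB⟩ :=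
    (((tendsto_volume_setOf_le_abs_sub hh hpt hytop (half_pos hε) 0 1).eventually
      (gt_mem_nhds hhalf)).and ((tendsto_volume_setOf_le_abs_sub hh hpt hyutop (half_pos hε)
      (-d) (1 - c)).eventually (gt_mem_nhds hhalf))).exists
  -- at a point `t` that is good for both `y n` and `y n + u n`, the defect at `u n` is at most
  -- the sum of the defects at `t` and `t - u n`
  obtain ⟨t, ht, htA, htB⟩ := exists_mem_Icc_notMem_notMem_add
    ((ENNReal.add_lt_add hA hB).trans_le (ENNReal.add_halves 1).le) (-u n)
  have h1 : |h (y n + t) - h (y n) - β * t| < ε / 2 := not_le.1 fun hle => htA ⟨hle, ht⟩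
  have h2 : |h (y n + t) - h (y n + u n) - β * (t - u n)| < ε / 2 := by
    refine not_le.1 fun hle => htB ⟨?_, ?_, ?_⟩
    · simpa [← sub_eq_add_neg] using hle
    · linarith [ht.1, (hu n).2]
    · linarith [ht.2, (hu n).1]
  have h3 := hεu n
  rw [Real.dist_eq] at h3
  rw [abs_lt] at h1 h2
  rcases le_abs'.1 h3 with h3 | h3 <;> linarith

end UniformConvergence

theorem mul_rpow_mul_le_of_doubling {g : ℝ → ℝ} {X c γ : ℝ} (hX : 0 < X) (hc : 0 ≤ c)
    (hγ : γ ≤ 0) (hg : ∀ x ≥ X, 0 ≤ g x) (hdouble : ∀ x ≥ X, 2 ^ γ * g x ≤ g (2 * x))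
    (hstep : ∀ x ≥ X, ∀ l ∈ Set.Icc (1 : ℝ) 2, c * g x ≤ g (l * x)) {x u : ℝ} (hx : X ≤ x)
    (hu : 1 ≤ u) : c * u ^ γ * g x ≤ g (u * x) := by
  have hpow : ∀ m : ℕ, X ≤ 2 ^ m * x := fun m =>
    hx.trans (le_mul_of_one_le_left (hX.le.trans hx) (one_le_pow₀ one_le_two))
  have hchain : ∀ m : ℕ, ((2 : ℝ) ^ γ) ^ m * g x ≤ g (2 ^ m * x) := by
    intro m
    induction m with
    | zero => simp
    | succ m ih =>
      calc ((2 : ℝ) ^ γ) ^ (m + 1) * g x = 2 ^ γ * (((2 : ℝ) ^ γ) ^ m * g x) := by ring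
        _ ≤ 2 ^ γ * g (2 ^ m * x) := mul_le_mul_of_nonneg_left ih (by positivity)
        _ ≤ g (2 * (2 ^ m * x)) := hdouble _ (hpow m)
        _ = g (2 ^ (m + 1) * x) := by ring_nf
  obtain ⟨m, hm, hm1⟩ := exists_nat_pow_near hu one_lt_two
  have h2m : (0 : ℝ) < 2 ^ m := by positivity
  have hl : u / 2 ^ m ∈ Set.Icc (1 : ℝ) 2 :=
    ⟨(one_le_div h2m).2 hm, (div_le_iff₀ h2m).2 (by rw [pow_succ] at hm1; linarith)⟩
  calc c * u ^ γ * g x ≤ c * (((2 : ℝ) ^ γ) ^ m * g x) := by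
        rw [mul_assoc, rpow_pow_comm zero_le_two]
        exact mul_le_mul_of_nonneg_left
          (mul_le_mul_of_nonneg_right (rpow_le_rpow_of_nonpos h2m hm hγ) (hg x hx)) hc
    _ ≤ c * g (2 ^ m * x) := mul_le_mul_of_nonneg_left (hchain m) hc
    _ ≤ g (u / 2 ^ m * (2 ^ m * x)) := hstep _ (hpow m) _ hl
    _ = g (u * x) := by congr 1; field_simp

namespace RegularlyVarying

variable {f : ℝ → ℝ} {β : ℝ}

theorem tendsto_log_comp_exp_add_sub (hRV : RegularlyVarying f β)
    (hpos : ∀ x : ℝ, 0 < x → 0 < f x) (u : ℝ) :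
    Tendsto (fun y => log (f (exp (y + u))) - log (f (exp y))) atTop (𝓝 (β * u)) := by
  have := ((hRV (exp u) (exp_pos u)).comp tendsto_exp_atTop).log
    (rpow_pos_of_pos (exp_pos u) β).ne'
  rw [log_rpow (exp_pos u), log_exp] at this
  refine this.congr fun y => ?_
  rw [Function.comp_apply, log_div (hpos _ (by positivity)).ne' (hpos _ (exp_pos y)).ne',
    exp_add, mul_comm]

theorem tendstoUniformlyOn (hRV : RegularlyVarying f β) (hpos : ∀ x : ℝ, 0 < x → 0 < f x)
    (hmeas : Measurable f) {a : ℝ} (ha : 0 < a) (b : ℝ) :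
    TendstoUniformlyOn (fun x l => f (l * x) / f x) (fun l => l ^ β) atTop (Set.Icc a b) := by
  have hadd := Metric.tendstoUniformlyOn_iff.1 (tendstoUniformlyOn_add_sub_of_tendsto
    (measurable_log.comp (hmeas.comp measurable_exp)) (hRV.tendsto_log_comp_exp_add_sub hpos)
    (log a) (log b))
  obtain ⟨M, hM⟩ := isCompact_Icc.exists_bound_of_continuousOn (f := fun l : ℝ => l ^ β)
    (continuousOn_id.rpow_const fun l hl => Or.inl (ha.trans_le hl.1).ne')
  rw [Metric.tendstoUniformlyOn_iff]
  intro ε hε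
  set η := min 1 (ε / (2 * (|M| + 1)))
  filter_upwards [tendsto_log_atTop.eventually (hadd η (by positivity)), eventually_gt_atTop 0]
    with x hx hx0 l hl
  have hl0 : 0 < l := ha.trans_le hl.1
  set r := log (f (exp (log x + log l))) - log (f (exp (log x))) - β * log l
  have hr : |r| < η := by
    have := hx (log l) ⟨log_le_log ha hl.1, log_le_log hl0 hl.2⟩
    rwa [Real.dist_eq, abs_sub_comm] at this
  have hratio : f (l * x) / f x = l ^ β * exp r := by
    rw [exp_sub, exp_sub, exp_log (hpos _ (exp_pos _)), exp_log (hpos _ (exp_pos _)), exp_add,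
      exp_log hx0, exp_log hl0, mul_comm β, ← rpow_def_of_pos hl0, mul_comm x]
    field_simp
  have hlβ : |l ^ β| ≤ |M| := (hM l hl).trans (le_abs_self M)
  rw [Real.dist_eq, hratio]
  calc |l ^ β - l ^ β * exp r| = |l ^ β| * |exp r - 1| := by
        rw [← abs_mul, abs_sub_comm]; ring_nf
    _ ≤ |M| * (2 * η) := mul_le_mul hlβ ((abs_exp_sub_one_le (hr.le.trans (min_le_left _ _))).trans
        (by linarith)) (abs_nonneg _) (abs_nonneg _)
    _ ≤ |M| * (2 * (ε / (2 * (|M| + 1)))) := by gcongr; exact min_le_right _ _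
    _ < ε := by
        rw [mul_div_assoc', mul_div_mul_left _ _ two_ne_zero, mul_div_assoc',
          div_lt_iff₀ (by positivity)]
        nlinarith

theorem exists_div_le_mul_rpow (hRV : RegularlyVarying f β) (hpos : ∀ x : ℝ, 0 < x → 0 < f x)
    (hmeas : Measurable f) {γ : ℝ} (hγβ : γ < β) (hγ : γ ≤ 0) :
    ∃ X > 0, ∃ C > 0, ∀ x ≥ X, ∀ y ≥ x, f x / f y ≤ C * (x / y) ^ γ := by
  set c := min 1 ((2 : ℝ) ^ β) / 2
  have hc : 0 < c := by positivity
  have hlow : ∀ l ∈ Set.Icc (1 : ℝ) 2, 2 * c ≤ l ^ β := by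
    rintro l ⟨hl1, hl2⟩
    rw [mul_div_cancel₀ _ two_ne_zero]
    rcases le_total 0 β with hβ | hβ
    · exact (min_le_left _ _).trans (one_le_rpow hl1 hβ)
    · exact (min_le_right _ _).trans (rpow_le_rpow_of_nonpos (one_pos.trans_le hl1) hl2 hβ)
  have h2γ : (2 : ℝ) ^ γ < 2 ^ β := rpow_lt_rpow_of_exponent_lt one_lt_two hγβ
  set η := min c (2 ^ β - 2 ^ γ)
  obtain ⟨X, hX⟩ := eventually_atTop.1 (Metric.tendstoUniformlyOn_iff.1
    (hRV.tendstoUniformlyOn hpos hmeas one_pos 2) η (lt_min hc (by linarith)))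
  have hX1 : 0 < max X 1 := lt_max_of_lt_right one_pos
  have hratio : ∀ x ≥ max X 1, ∀ l ∈ Set.Icc (1 : ℝ) 2, l ^ β - η < f (l * x) / f x :=
    fun x hx l hl => by
      have := hX x (le_of_max_le_left hx) l hl
      rw [Real.dist_eq, abs_sub_lt_iff] at this
      linarith
  have hfpos : ∀ x ≥ max X 1, 0 < f x := fun x hx => hpos x (hX1.trans_le hx)
  have hdouble : ∀ x ≥ max X 1, 2 ^ γ * f x ≤ f (2 * x) := fun x hx => by
    have := hratio x hx 2 ⟨one_le_two, le_rfl⟩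
    rw [← le_div_iff₀ (hfpos x hx)]
    linarith [min_le_right c (2 ^ β - 2 ^ γ)]
  have hstep : ∀ x ≥ max X 1, ∀ l ∈ Set.Icc (1 : ℝ) 2, c * f x ≤ f (l * x) := fun x hx l hl => by
    have := hratio x hx l hl
    rw [← le_div_iff₀ (hfpos x hx)]
    linarith [min_le_left c (2 ^ β - 2 ^ γ), hlow l hl]
  refine ⟨max X 1, hX1, c⁻¹, inv_pos.2 hc, fun x hx y hxy => ?_⟩
  have hx0 : 0 < x := hX1.trans_le hx
  have key := mul_rpow_mul_le_of_doubling hX1 hc.le hγ (fun x hx => (hfpos x hx).le) hdouble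
    hstep hx ((one_le_div hx0).2 hxy)
  rw [div_mul_cancel₀ _ hx0.ne'] at key
  have hyx : 0 < y / x := div_pos (hx0.trans_le hxy) hx0
  have hyxγ : 0 < (y / x) ^ γ := rpow_pos_of_pos hyx γ
  rw [div_le_iff₀ (hfpos y (hx.trans hxy)), ← inv_div, inv_rpow hyx.le]
  calc f x = c⁻¹ * ((y / x) ^ γ)⁻¹ * (c * (y / x) ^ γ * f x) := by
        field_simp
    _ ≤ c⁻¹ * ((y / x) ^ γ)⁻¹ * f y := by gcongr

theorem exists_nat_div_le_mul_rpow (hRV : RegularlyVarying f β)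
    (hpos : ∀ x : ℝ, 0 < x → 0 < f x) (hmeas : Measurable f) {γ : ℝ} (hγβ : γ < β)
    (hγ : γ ≤ 0) :
    ∃ C ≥ 0, ∀ᶠ n : ℕ in atTop, ∀ k ∈ Icc 1 n, f k / f n ≤ C * ((k : ℝ) / n) ^ γ := by
  obtain ⟨X, hX, C, hC, hpotter⟩ := hRV.exists_div_le_mul_rpow hpos hmeas hγβ hγ
  set M := ∑ j ∈ Icc 1 ⌈X⌉₊, f j
  have hfX := hpos X hX
  have hM : 0 ≤ M := sum_nonneg fun (j : ℕ) hj => (hpos j (Nat.cast_pos.2 (mem_Icc.1 hj).1)).le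
  refine ⟨C * max 1 (M / f X), by positivity, ?_⟩
  filter_upwards [eventually_ge_atTop ⌈X⌉₊] with n hn k hk
  obtain ⟨hk1, hkn⟩ := mem_Icc.1 hk
  have hXn : X ≤ n := (Nat.le_ceil X).trans (by exact_mod_cast hn)
  have hk0 : (0 : ℝ) < k := by exact_mod_cast hk1
  have hkn' : (k : ℝ) ≤ n := by exact_mod_cast hkn
  rcases le_total X k with hXk | hkX
  · calc f k / f n ≤ C * ((k : ℝ) / n) ^ γ := hpotter k hXk n hkn'
      _ ≤ _ := by
          rw [mul_right_comm]
          exact le_mul_of_one_le_right (by positivity) (le_max_left _ _)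
  · have hfk : f k ≤ M := single_le_sum (fun (j : ℕ) hj => (hpos j (Nat.cast_pos.2
        (mem_Icc.1 hj).1)).le) (mem_Icc.2 ⟨hk1, Nat.cast_le.1 (hkX.trans (Nat.le_ceil X))⟩)
    have hkn0 : (0 : ℝ) < k / n := div_pos hk0 (hk0.trans_le hkn')
    have hXn0 : 0 < X / n := div_pos hX (hX.trans_le hXn)
    calc f k / f n = f k / f X * (f X / f n) := by
          field_simp [(hpos n (hX.trans_le hXn)).ne']
      _ ≤ M / f X * (C * (X / n) ^ γ) := mul_le_mul (div_le_div_of_nonneg_right hfk hfX.le)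
          (hpotter X le_rfl n hXn) (div_pos hfX (hpos n (hX.trans_le hXn))).le (by positivity)
      _ ≤ max 1 (M / f X) * (C * ((k : ℝ) / n) ^ γ) :=
          mul_le_mul (le_max_right _ _) (mul_le_mul_of_nonneg_left (rpow_le_rpow_of_nonpos hkn0
            (div_le_div_of_nonneg_right hkX (Nat.cast_nonneg _)) hγ) hC.le)
            (mul_pos hC (rpow_pos_of_pos hXn0 γ)).le (by positivity)
      _ = _ := by ring

theorem eventually_abs_div_sub_rpow_le (hRV : RegularlyVarying f β)
    (hpos : ∀ x : ℝ, 0 < x → 0 < f x) (hmeas : Measurable f) {δ η : ℝ} (hδ : 0 < δ)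
    (hη : 0 < η) :
    ∀ᶠ n : ℕ in atTop, ∀ k ∈ Icc 1 n, δ * n ≤ k → |f k / f n - ((k : ℝ) / n) ^ β| ≤ η := by
  have := Metric.tendstoUniformlyOn_iff.1 (hRV.tendstoUniformlyOn hpos hmeas hδ 1) η hη
  filter_upwards [tendsto_natCast_atTop_atTop.eventually this, eventually_gt_atTop 0]
    with n hn hn0 k hk hδk
  have hn' : (0 : ℝ) < n := Nat.cast_pos.2 hn0
  have := hn (k / n) ⟨(le_div_iff₀ hn').2 hδk,
    (div_le_one hn').2 (Nat.cast_le.2 (mem_Icc.1 hk).2)⟩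
  rw [div_mul_cancel₀ _ hn'.ne', Real.dist_eq, abs_sub_comm] at this
  exact this.le

theorem exists_eventually_abs_div_sub_rpow_le_mul_rpow (hRV : RegularlyVarying f β)
    (hpos : ∀ x : ℝ, 0 < x → 0 < f x) (hmeas : Measurable f) {γ : ℝ} (hγβ : γ < β)
    (hγ : γ ≤ 0) :
    ∃ D ≥ 0, ∀ᶠ n : ℕ in atTop, ∀ k ∈ Icc 1 n,
      |f k / f n - ((k : ℝ) / n) ^ β| ≤ D * ((k : ℝ) / n) ^ γ := by
  obtain ⟨C, hC, hpotter⟩ := hRV.exists_nat_div_le_mul_rpow hpos hmeas hγβ hγ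
  refine ⟨C + 1, by positivity, ?_⟩
  filter_upwards [hpotter] with n hn k hk
  obtain ⟨hk1, hkn⟩ := mem_Icc.1 hk
  have hk0 : (0 : ℝ) < k := Nat.cast_pos.2 hk1
  have hkn' : (k : ℝ) ≤ n := Nat.cast_le.2 hkn
  have hkn0 : 0 < (k : ℝ) / n := div_pos hk0 (hk0.trans_le hkn')
  have hratio : 0 ≤ f k / f n := div_nonneg (hpos _ hk0).le (hpos _ (hk0.trans_le hkn')).le
  have hβγ : ((k : ℝ) / n) ^ β ≤ ((k : ℝ) / n) ^ γ :=
    rpow_le_rpow_of_exponent_ge hkn0 (div_le_one_of_le₀ hkn' (Nat.cast_nonneg _)) hγβ.le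
  have hfk := hn k hk
  have hkβ := rpow_pos_of_pos hkn0 β
  rw [abs_le, add_mul, one_mul]
  constructor <;> linarith

end RegularlyVarying

theorem karamata_discrete_general
    (f : ℝ → ℝ) (hpos : ∀ x : ℝ, 0 < x → 0 < f x)
    (hmeas : Measurable f)
    (β : ℝ) (hβ : -1 < β) (hRV : RegularlyVarying f β) :
    Filter.Tendsto (fun n : ℕ => (∑ k ∈ Finset.Icc 1 n, f k) / ((n : ℝ) * f n))
      Filter.atTop (nhds (1 / (1 + β))) := by
  obtain ⟨γ, hγ, hγ0, hγβ⟩ : ∃ γ, -1 < γ ∧ γ ≤ 0 ∧ γ < β :=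
    ⟨(min β 0 - 1) / 2, by linarith [lt_min hβ (by norm_num : (-1 : ℝ) < 0)],
      by linarith [min_le_right β 0], by linarith [min_le_left β 0]⟩
  obtain ⟨D, hD, hfar⟩ :=
    hRV.exists_eventually_abs_div_sub_rpow_le_mul_rpow hpos hmeas hγβ hγ0
  have := (tendsto_sum_Icc_div_rpow_div hβ).add
    (tendsto_sum_div_sub_sum_div_of_dominated hγ hγ0 hD hfar
      fun δ hδ η hη => hRV.eventually_abs_div_sub_rpow_le hpos hmeas hδ hη)
  rw [add_zero] at this
  refine this.congr fun n => ?_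
  rw [add_sub_cancel, ← sum_div, div_div, mul_comm]

/-- Discrete version of Karamata's theorem: if `f` is regularly varying with index
`β > -1`, then `Σ_{k=1}^n f(k) ∼ n f(n)/(1+β)` as `n → ∞`. -/
theorem karamata_discrete
    (f : ℝ → ℝ) (hpos : ∀ x : ℝ, 0 < x → 0 < f x)
    (hmeas : Measurable f)
    (hbdd : ∀ K : Set ℝ, K ⊆ Set.Ioi 0 → IsCompact K → ∃ M : ℝ, ∀ x ∈ K, f x ≤ M)
    (β : ℝ) (hβ : -1 < β) (hRV : RegularlyVarying f β) :
    Filter.Tendsto (fun n : ℕ => (∑ k ∈ Finset.Icc 1 n, f k) / ((n : ℝ) * f n))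
      Filter.atTop (nhds (1 / (1 + β))) :=
  karamata_discrete_general f hpos hmeas β hβ hRV
end

section
/- Let R:(0,∞)→(0,∞) be monotone on (0,∞) and regularly varying at +∞ with index −α where α<1, and let σ_n² = Σ_{k=1}^n R(k). Then there exist C>0 and n₀∈ℕ such that for all n≥n₀ and all real t∈[1, n/2], the tail sum S₂ = σ_n^{−2} Σ_{k=⌊n/t⌋}^{n} R(k) cos(2πkt/n) satisfies |S₂| ≤ (C/(t R(n))) ( Σ_{k=⌊n/t⌋}^{n−1} |R(k)−R(k+1)| + R(n) + R(⌊n/t⌋) ). -/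
/-!
Write `θ = 2πt/n`. The partial sums of `cos (kθ)` are bounded by `1 / sin (θ/2) ≤ n / (2t)`
(Jordan's inequality), so Abel summation bounds the numerator by `n / (2t)` times the total
variation of `R` on `[⌊n/t⌋, n]` plus the two boundary values. The denominator
`σ_n² = ∑_{k ≤ n} R k` is at least a constant times `n R(n)`: for antitone `R` trivially, and
for monotone `R` because the top half of the sum is at least `(n/2) R(n/2)`, while regular
variation gives `R(n/2) ≍ R(n)`.
-/

open Filter Real

open Finset

theorem abs_sum_Icc_mul_le_of_abs_sum_range_le (f g : ℕ → ℝ) {K : ℝ}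
    (hK : ∀ k, |∑ i ∈ range k, g i| ≤ K) {m n : ℕ} (hmn : m ≤ n) :
    |∑ k ∈ Icc m n, f k * g k| ≤
      K * (∑ k ∈ Ico m n, |f k - f (k + 1)| + |f n| + |f m|) := by
  have hterm : ∀ (a : ℝ) k, |a * ∑ i ∈ range k, g i| ≤ |a| * K := fun a k => by
    rw [abs_mul]; exact mul_le_mul_of_nonneg_left (hK k) (abs_nonneg a)
  have hvar : |∑ k ∈ Ico m n, (f (k + 1) - f k) * ∑ i ∈ range (k + 1), g i| ≤
      ∑ k ∈ Ico m n, |f k - f (k + 1)| * K :=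
    (abs_sum_le_sum_abs _ _).trans
      (sum_le_sum fun k _ => abs_sub_comm (f k) (f (k + 1)) ▸ hterm _ _)
  have habel := sum_Ico_by_parts f g (Nat.lt_add_one_of_le hmn)
  simp only [smul_eq_mul, Nat.add_sub_cancel, Ico_add_one_right_eq_Icc] at habel
  rw [habel]
  calc _ ≤ |f n * ∑ i ∈ range (n + 1), g i| + |f m * ∑ i ∈ range m, g i| +
        |∑ k ∈ Ico m n, (f (k + 1) - f k) * ∑ i ∈ range (k + 1), g i| :=
        (abs_sub _ _).trans (add_le_add_left (abs_sub _ _) _)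
    _ ≤ |f n| * K + |f m| * K + ∑ k ∈ Ico m n, |f k - f (k + 1)| * K :=
        add_le_add (add_le_add (hterm _ _) (hterm _ _)) hvar
    _ = _ := by rw [← sum_mul]; ring

theorem abs_sum_range_cos_mul_le {θ : ℝ} (hθ : sin (θ / 2) ≠ 0) (n : ℕ) :
    |∑ i ∈ range n, cos (θ * i)| ≤ |sin (θ / 2)|⁻¹ := by
  have h := sin_mul_sum_cos n θ 0
  simp only [add_zero] at h
  rw [← one_div, le_div_iff₀ (abs_pos.2 hθ), mul_comm, ← abs_mul, h, abs_mul]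
  exact mul_le_one₀ (abs_sin_le_one _) (abs_nonneg _) (abs_cos_le_one _)

theorem abs_sum_Icc_mul_cos_le (f : ℕ → ℝ) {n : ℕ} {t : ℝ} (ht : 0 < t) (htn : t ≤ n / 2)
    {m : ℕ} (hmn : m ≤ n) :
    |∑ k ∈ Icc m n, f k * cos (2 * π * k * t / n)| ≤
      n / (2 * t) * (∑ k ∈ Ico m n, |f k - f (k + 1)| + |f n| + |f m|) := by
  have hn : (0 : ℝ) < n := by linarith
  have hjordan : 2 * t / n ≤ sin (2 * π * t / n / 2) := by
    have hx : 2 * π * t / n / 2 ≤ π / 2 := by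
      rw [div_le_div_iff_of_pos_right two_pos, div_le_iff₀ hn]; nlinarith [pi_pos]
    calc 2 * t / n = 2 / π * (2 * π * t / n / 2) := by field_simp
      _ ≤ _ := mul_le_sin (by positivity) hx
  have hsin : 0 < sin (2 * π * t / n / 2) := (by positivity : (0 : ℝ) < 2 * t / n).trans_le hjordan
  refine abs_sum_Icc_mul_le_of_abs_sum_range_le f _ (fun k => ?_) hmn
  calc |∑ i ∈ range k, cos (2 * π * i * t / n)| = |∑ i ∈ range k, cos (2 * π * t / n * i)| := by
        simp only [mul_div_right_comm, mul_right_comm _ t]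
    _ ≤ |sin (2 * π * t / n / 2)|⁻¹ := abs_sum_range_cos_mul_le hsin.ne' k
    _ ≤ (2 * t / n)⁻¹ := by rw [abs_of_pos hsin]; gcongr
    _ = n / (2 * t) := inv_div _ _

theorem RegularlyVarying.eventually_half_rpow_mul_le {f : ℝ → ℝ} {β : ℝ}
    (hf : RegularlyVarying f β) (hpos : ∀ᶠ x in atTop, 0 < f x) {l : ℝ} (hl : 0 < l) :
    ∀ᶠ x in atTop, l ^ β / 2 * f x ≤ f (l * x) := by
  have hlβ : 0 < l ^ β := rpow_pos_of_pos hl β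
  filter_upwards [(hf l hl).eventually (eventually_ge_nhds (half_lt_self hlβ)), hpos]
    with x hx hfx
  rwa [le_div_iff₀ hfx] at hx

theorem AntitoneOn.mul_le_sum_Icc {R : ℝ → ℝ} (hR : AntitoneOn R (Set.Ioi 0)) (n : ℕ) :
    n * R n ≤ ∑ k ∈ Icc 1 n, R k := by
  have h := card_nsmul_le_sum (Icc 1 n) (fun k : ℕ => R k) (R n) fun k hk => by
    obtain ⟨hk1, hkn⟩ := mem_Icc.1 hk
    exact hR (by simp; omega) (by simp; omega) (by exact_mod_cast hkn)
  simpa using h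

theorem MonotoneOn.half_mul_le_sum_Icc {R : ℝ → ℝ} (hR : MonotoneOn R (Set.Ioi 0))
    (hR0 : ∀ x : ℝ, 0 < x → 0 ≤ R x) {n : ℕ} (hn : 0 < n) :
    (n / 2 : ℝ) * R (n / 2) ≤ ∑ k ∈ Icc 1 n, R k := by
  have hn2 : (0 : ℝ) < n / 2 := by positivity
  have htop : #(Ioc ⌊(n : ℝ) / 2⌋₊ n) • R (n / 2) ≤ ∑ k ∈ Ioc ⌊(n : ℝ) / 2⌋₊ n, R k :=
    card_nsmul_le_sum _ (fun k : ℕ => R k) _ fun k hk => by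
      have hk : (n : ℝ) / 2 < k := (Nat.floor_lt hn2.le).1 (mem_Ioc.1 hk).1
      exact hR hn2 (hn2.trans hk) hk.le
  have hcard : (n / 2 : ℝ) ≤ #(Ioc ⌊(n : ℝ) / 2⌋₊ n) := by
    rw [Nat.card_Ioc, Nat.cast_sub (Nat.floor_le_of_le (by linarith))]
    linarith [Nat.floor_le hn2.le]
  have hsub : ∑ k ∈ Ioc ⌊(n : ℝ) / 2⌋₊ n, R k ≤ ∑ k ∈ Icc 1 n, R k :=
    sum_le_sum_of_subset_of_nonneg (fun k hk => mem_Icc.2 ⟨by simp at hk; omega, (mem_Ioc.1 hk).2⟩)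
      fun k hk _ => hR0 k (Nat.cast_pos.2 (mem_Icc.1 hk).1)
  rw [nsmul_eq_mul] at htop
  nlinarith [hR0 _ hn2]

theorem exists_pos_mul_le_sum_Icc_of_regularlyVarying {R : ℝ → ℝ} {β : ℝ}
    (hRpos : ∀ x : ℝ, 0 < x → 0 < R x)
    (hRmono : MonotoneOn R (Set.Ioi 0) ∨ AntitoneOn R (Set.Ioi 0))
    (hRV : RegularlyVarying R β) :
    ∃ c : ℝ, 0 < c ∧ ∀ᶠ n : ℕ in atTop, c * n * R n ≤ ∑ k ∈ Icc 1 n, R k := by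
  rcases hRmono with hmono | hanti
  · refine ⟨(1 / 2 : ℝ) ^ β / 4, by positivity, ?_⟩
    have hratio := (hRV.eventually_half_rpow_mul_le (eventually_gt_atTop 0 |>.mono hRpos)
      one_half_pos).natCast_atTop
    filter_upwards [hratio, eventually_gt_atTop 0] with n hn hn0
    have := hmono.half_mul_le_sum_Icc (fun x hx => (hRpos x hx).le) hn0
    rw [one_div_mul_eq_div] at hn
    nlinarith [(by positivity : (0 : ℝ) ≤ n / 2)]
  · exact ⟨1, one_pos, Eventually.of_forall fun n => by simpa using hanti.mul_le_sum_Icc n⟩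

theorem tail_sum_abel_bound_general
    (R : ℝ → ℝ) (hRpos : ∀ x : ℝ, 0 < x → 0 < R x)
    (hRmono : MonotoneOn R (Set.Ioi (0 : ℝ)) ∨ AntitoneOn R (Set.Ioi (0 : ℝ)))
    (α : ℝ) (hRV : RegularlyVarying R (-α)) :
    ∃ C : ℝ, 0 < C ∧ ∃ n₀ : ℕ, ∀ n : ℕ, n₀ ≤ n → ∀ t : ℝ, 1 ≤ t → t ≤ (n : ℝ) / 2 →
      |(∑ k ∈ Finset.Icc ⌊(n : ℝ) / t⌋₊ n, R k * Real.cos (2 * π * k * t / n)) /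
          (∑ k ∈ Finset.Icc 1 n, R k)| ≤
        C / (t * R n) *
          ((∑ k ∈ Finset.Ico ⌊(n : ℝ) / t⌋₊ n, |R k - R ((k : ℝ) + 1)|) +
            R n + R (⌊(n : ℝ) / t⌋₊ : ℝ)) := by
  obtain ⟨c, hc, hσ⟩ := exists_pos_mul_le_sum_Icc_of_regularlyVarying hRpos hRmono hRV
  obtain ⟨n₀, hn₀⟩ := eventually_atTop.1 hσ
  refine ⟨1 / (2 * c), by positivity, n₀, fun n hn t ht1 htn => ?_⟩
  have ht : 0 < t := by linarith
  have hn0 : (0 : ℝ) < n := by linarith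
  have hm : (0 : ℝ) < ⌊(n : ℝ) / t⌋₊ :=
    Nat.cast_pos.2 (Nat.floor_pos.2 ((one_le_div ht).2 (by linarith)))
  have hmn : ⌊(n : ℝ) / t⌋₊ ≤ n := Nat.floor_le_of_le ((div_le_self hn0.le ht1))
  have hnum := abs_sum_Icc_mul_cos_le (fun k => R k) ht htn hmn
  push_cast at hnum
  have hRn := hRpos _ hn0
  have hRm := hRpos _ hm
  rw [abs_of_pos hRn, abs_of_pos hRm] at hnum
  have hden : 0 < c * n * R n := by positivity
  rw [abs_div, abs_of_pos (hden.trans_le (hn₀ n hn))]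
  calc _ ≤ n / (2 * t) * (∑ k ∈ Ico ⌊(n : ℝ) / t⌋₊ n, |R k - R ((k : ℝ) + 1)| + R n +
        R ⌊(n : ℝ) / t⌋₊) / (c * n * R n) :=
        div_le_div₀ (by positivity) hnum hden (hn₀ n hn)
    _ = _ := by field_simp

/-- Abel-summation estimate for the tail sum
`S₂ = σ_n^{-2} Σ_{k=⌊n/t⌋}^n R(k) cos(2πkt/n)`:
`|S₂| ≤ (C/(t R(n))) (Σ_{k=⌊n/t⌋}^{n-1} |R(k)-R(k+1)| + R(n) + R(⌊n/t⌋))`. -/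
theorem tail_sum_abel_bound
    (R : ℝ → ℝ) (hRpos : ∀ x : ℝ, 0 < x → 0 < R x)
    (hRmono : MonotoneOn R (Set.Ioi (0 : ℝ)) ∨ AntitoneOn R (Set.Ioi (0 : ℝ)))
    (α : ℝ) (hα : α < 1) (hRV : RegularlyVarying R (-α)) :
    ∃ C : ℝ, 0 < C ∧ ∃ n₀ : ℕ, ∀ n : ℕ, n₀ ≤ n → ∀ t : ℝ, 1 ≤ t → t ≤ (n : ℝ) / 2 →
      |(∑ k ∈ Finset.Icc ⌊(n : ℝ) / t⌋₊ n, R k * Real.cos (2 * π * k * t / n)) /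
          (∑ k ∈ Finset.Icc 1 n, R k)| ≤
        C / (t * R n) *
          ((∑ k ∈ Finset.Ico ⌊(n : ℝ) / t⌋₊ n, |R k - R ((k : ℝ) + 1)|) +
            R n + R (⌊(n : ℝ) / t⌋₊ : ℝ)) :=
  tail_sum_abel_bound_general R hRpos hRmono α hRV
end
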